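/- arXiv:2108.08173 — 2 statements merged into one kernel-verified Lean document; each statement's English description precedes it below -/
import Mathlib

section
/- The index n*(θ) = argmin_{n ∈ {1,…,N}} |θ - θ̄_n| maximizes |Γ(θ - θ̄_n)| over n, i.e., the angle-domain entry with largest magnitude of F a(θ) is attained at the angle-domain sample closest to θ, provided θ ∈ [θ̄_1, θ̄_N] and the minimizer is unique. -/
/-!
Write `d = θ - θbar nstar` and `y = θ - θbar n`. Since `y - d ∈ (2 / N) ℤ`, the numerators
`sin (N π y / 2)` and `sin (N π d / 2)` agree up to sign. The range condition on `θ` gives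
`|d| ≤ 1 / N` and `|y| ≤ 2 - 2 / N`, so `|d| < |y|` and `|d| + |y| < 2`; in that regime
`|sin (π x / 2)|` is smaller at `x = d` than at `x = y` (by `sin_sub_sin`), so the quotient
is larger.
-/

open Real

theorem abs_sin_le_abs_sin_of_abs_le {u v : ℝ} (huv : |u| ≤ |v|) (hsum : |u| + |v| ≤ π) :
    |sin u| ≤ |sin v| := by
  rw [abs_sin_eq_sin_abs_of_abs_le_pi (by linarith [abs_nonneg v]),
    abs_sin_eq_sin_abs_of_abs_le_pi (by linarith [abs_nonneg u]), ← sub_nonneg, sin_sub_sin]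
  have hsin : 0 ≤ sin ((|v| - |u|) / 2) :=
    sin_nonneg_of_nonneg_of_le_pi (by linarith) (by linarith [abs_nonneg u, pi_pos])
  have hcos : 0 ≤ cos ((|v| + |u|) / 2) :=
    cos_nonneg_of_mem_Icc ⟨by linarith [abs_nonneg u, abs_nonneg v, pi_pos], by linarith⟩
  positivity

theorem abs_sin_add_int_mul_pi (x : ℝ) (k : ℤ) : |sin (x + k * π)| = |sin x| := by
  rw [sin_add_int_mul_pi, abs_mul, abs_neg_one_zpow, one_mul]

theorem sin_pi_mul_div_two_ne_zero {x : ℝ} (hx : x ≠ 0) (hx2 : |x| < 2) :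
    sin (π * x / 2) ≠ 0 := by
  obtain ⟨hlo, hhi⟩ := abs_lt.mp hx2
  rw [Ne, sin_eq_zero_iff_of_lt_of_lt (by nlinarith [pi_pos]) (by nlinarith [pi_pos])]
  positivity

theorem abs_kernel_le_of_abs_lt {N : ℕ} {G : ℝ → ℝ}
    (hG : ∀ x, sin (π * x / 2) ≠ 0 → G x = sin (N * π * x / 2) / sin (π * x / 2))
    {d y : ℝ} (k : ℤ) (hk : N * (y - d) = 2 * k) (hdy : |d| < |y|) (hsum : |d| + |y| < 2) :
    |G y| ≤ |G d| := by
  have hy : sin (π * y / 2) ≠ 0 :=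
    sin_pi_mul_div_two_ne_zero (abs_pos.mp ((abs_nonneg d).trans_lt hdy))
      (by linarith [abs_nonneg d])
  have hnum : |sin (N * π * y / 2)| = |sin (N * π * d / 2)| := by
    rw [show N * π * y / 2 = N * π * d / 2 + k * π by linear_combination π / 2 * hk,
      abs_sin_add_int_mul_pi]
  have hden : |sin (π * d / 2)| ≤ |sin (π * y / 2)| := by
    apply abs_sin_le_abs_sin_of_abs_le
    · simp only [abs_div, abs_mul, abs_of_pos pi_pos, abs_two]; gcongr
    · simp only [abs_div, abs_mul, abs_of_pos pi_pos, abs_two]; nlinarith [pi_pos]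
  rw [hG y hy, abs_div, hnum]
  -- `hG` says nothing about `G 0`, but the numerator at `y` vanishes there
  obtain rfl | hd0 := eq_or_ne d 0
  · simp
  have hd : sin (π * d / 2) ≠ 0 := sin_pi_mul_div_two_ne_zero hd0 (by linarith [abs_nonneg y])
  rw [hG d hd, abs_div]
  gcongr

theorem exists_fin_abs_sub_le_half {N : ℕ} {t : ℝ} (ht : t ∈ Set.Icc (0 : ℝ) (N - 1)) :
    ∃ m : Fin N, |t - m| ≤ 1 / 2 := by
  have hlt : ⌊t + 1 / 2⌋₊ < N := (Nat.floor_lt (by linarith [ht.1])).mpr (by linarith [ht.2])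
  refine ⟨⟨_, hlt⟩, abs_le.mpr ⟨?_, ?_⟩⟩
  · linarith [Nat.floor_le (a := t + 1 / 2) (by linarith [ht.1])]
  · linarith [Nat.lt_floor_add_one (t + 1 / 2)]

/-- The sample `(2 * m + 1 - N) / N` sits at position `m`. -/
noncomputable def samplePos (N : ℕ) (θ : ℝ) : ℝ := (N * θ + N - 1) / 2

section Samples

variable {N : ℕ} {θbar : Fin N → ℝ}

theorem sub_sample_eq (hθ : ∀ n, θbar n = (2 * ((n : ℕ) : ℝ) + 1 - N) / N) (θ : ℝ)
    (m : Fin N) : θ - θbar m = 2 / N * (samplePos N θ - m) := by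
  have : (N : ℝ) ≠ 0 := Nat.cast_ne_zero.mpr m.pos.ne'
  rw [hθ, samplePos]; field_simp; ring

theorem abs_sub_sample_eq (hθ : ∀ n, θbar n = (2 * ((n : ℕ) : ℝ) + 1 - N) / N) (θ : ℝ)
    (m : Fin N) : |θ - θbar m| = 2 / N * |samplePos N θ - m| := by
  rw [sub_sample_eq hθ, abs_mul, abs_of_nonneg (by positivity)]

theorem natCast_mul_sample_sub_sample (hθ : ∀ n, θbar n = (2 * ((n : ℕ) : ℝ) + 1 - N) / N)
    (m n : Fin N) : N * (θbar m - θbar n) = 2 * (((m : ℤ) - n : ℤ) : ℝ) := by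
  have : (N : ℝ) ≠ 0 := Nat.cast_ne_zero.mpr m.pos.ne'
  rw [hθ, hθ]; push_cast; field_simp; ring

theorem samplePos_mem_Icc (hθ : ∀ n, θbar n = (2 * ((n : ℕ) : ℝ) + 1 - N) / N) {θ : ℝ}
    (hN : 0 < N) (hlo : θbar ⟨0, hN⟩ ≤ θ)
    (hhi : θ ≤ θbar ⟨N - 1, Nat.sub_lt hN one_pos⟩) :
    samplePos N θ ∈ Set.Icc (0 : ℝ) (N - 1) := by
  have hlo' := sub_nonneg.mpr hlo
  have hhi' := sub_nonpos.mpr hhi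
  rw [sub_sample_eq hθ, Nat.cast_zero, sub_zero] at hlo'
  rw [sub_sample_eq hθ, Nat.cast_sub (show 1 ≤ N from hN), Nat.cast_one] at hhi'
  exact ⟨nonneg_of_mul_nonneg_right hlo' (by positivity),
    sub_nonpos.mp (nonpos_of_mul_nonpos_right hhi' (by positivity))⟩

theorem abs_sub_sample_le (hθ : ∀ n, θbar n = (2 * ((n : ℕ) : ℝ) + 1 - N) / N) {θ : ℝ}
    (hθN : samplePos N θ ∈ Set.Icc (0 : ℝ) (N - 1)) (n : Fin N) :
    |θ - θbar n| ≤ 2 - 2 / N := by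
  have hn : (n : ℝ) + 1 ≤ N := by exact_mod_cast n.isLt
  have hN : (N : ℝ) ≠ 0 := Nat.cast_ne_zero.mpr n.pos.ne'
  calc |θ - θbar n| = 2 / N * |samplePos N θ - n| := abs_sub_sample_eq hθ θ n
    _ ≤ 2 / N * (N - 1) := by
      gcongr
      exact abs_le.mpr
        ⟨by linarith [hθN.1], by linarith [hθN.2, n.val.cast_nonneg (α := ℝ)]⟩
    _ = 2 - 2 / N := by field_simp

theorem abs_sub_nearest_sample_le (hθ : ∀ n, θbar n = (2 * ((n : ℕ) : ℝ) + 1 - N) / N)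
    {θ : ℝ} (hθN : samplePos N θ ∈ Set.Icc (0 : ℝ) (N - 1)) {nstar : Fin N}
    (hnearest : ∀ n, |θ - θbar nstar| ≤ |θ - θbar n|) : |θ - θbar nstar| ≤ 1 / N := by
  obtain ⟨m, hm⟩ := exists_fin_abs_sub_le_half hθN
  calc |θ - θbar nstar| ≤ |θ - θbar m| := hnearest m
    _ = 2 / N * |samplePos N θ - m| := abs_sub_sample_eq hθ θ m
    _ ≤ 2 / N * (1 / 2) := by gcongr
    _ = 1 / N := by ring

end Samples

/-- If `θ ∈ [θ̄ 1, θ̄ N]` and the angle-domain sample closest to `θ` is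
unique, then that closest sample maximizes `|Γ(θ - θ̄ n)|` over `n`, i.e., the
angle-domain entry of `F a(θ)` with largest magnitude is attained at the nearest sample.
`G` is the continuous extension of `Γ(x) = sin(Nπx/2)/sin(πx/2)`. -/
theorem nearest_sample_maximizes_gamma (N : ℕ) (hN : 2 ≤ N)
    (G : ℝ → ℝ)
    (hG : ∀ x, Real.sin (π * x / 2) ≠ 0 →
      G x = Real.sin (N * π * x / 2) / Real.sin (π * x / 2))
    (θbar : Fin N → ℝ) (hθ : ∀ n, θbar n = (2 * ((n : ℕ) : ℝ) + 1 - N) / N)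
    (θ : ℝ) (hθlo : θbar ⟨0, by omega⟩ ≤ θ) (hθhi : θ ≤ θbar ⟨N - 1, by omega⟩)
    (nstar : Fin N)
    (hunique : ∀ n : Fin N, n ≠ nstar → |θ - θbar nstar| < |θ - θbar n|) :
    ∀ n : Fin N, |G (θ - θbar n)| ≤ |G (θ - θbar nstar)| := by
  intro n
  obtain rfl | hn := eq_or_ne n nstar
  · exact le_rfl
  have hθN := samplePos_mem_Icc hθ (by omega) hθlo hθhi
  have hnear := abs_sub_nearest_sample_le hθ hθN fun m => by
    obtain rfl | hm := eq_or_ne m nstar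
    exacts [le_rfl, (hunique m hm).le]
  have hfar := abs_sub_sample_le hθ hθN n
  refine abs_kernel_le_of_abs_lt hG (nstar - n) ?_ (hunique n hn) ?_
  · rw [sub_sub_sub_cancel_left]
    exact natCast_mul_sample_sub_sample hθ nstar n
  · have : (0 : ℝ) < 1 / N := one_div_pos.mpr (by positivity)
    linarith [show 2 / (N : ℝ) = 2 * (1 / N) by ring]
end

section
/- The squared norm of the full angle-domain representation of a steering vector over all samples equals N when summed with the Γ² weights: Σ_{k=1}^{N} Γ(θ - θ̄_k)² = N² for every θ ∈ ℝ, where θ̄_k = (2k-N-1)/N. -/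
open Real Finset


lemma sin_mul_expsum (N : ℕ) (x : ℝ) :
    (Real.sin (π * x / 2) : ℂ) *
      ∑ j ∈ range N, Complex.exp (Complex.I * (π * x / 2) * (2 * j + 1 - N)) =
    (Real.sin (N * π * x / 2) : ℂ) := by
  set c : ℂ := ((π * x / 2 : ℝ) : ℂ) with hc
  have h2I : (Complex.exp (c * Complex.I) - Complex.exp (-c * Complex.I))
      = 2 * Complex.I * Complex.sin c := by
    rw [Complex.sin]; ring_nf; rw [Complex.I_sq]; ring
  have hNI : Complex.exp ((N * c) * Complex.I) - Complex.exp (-(N * c) * Complex.I)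
      = 2 * Complex.I * Complex.sin (N * c) := by
    rw [Complex.sin]; ring_nf; rw [Complex.I_sq]; ring
  have tel := Finset.sum_range_sub (fun j : ℕ => Complex.exp (Complex.I * c * (2 * j - N))) N
  have key : (Complex.exp (c * Complex.I) - Complex.exp (-c * Complex.I)) *
      ∑ j ∈ range N, Complex.exp (Complex.I * c * (2 * j + 1 - N)) =
      Complex.exp ((N * c) * Complex.I) - Complex.exp (-(N * c) * Complex.I) := by
    rw [Finset.mul_sum]
    have h1 : ∀ j ∈ range N,
        (Complex.exp (c * Complex.I) - Complex.exp (-c * Complex.I)) *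
          Complex.exp (Complex.I * c * (2 * j + 1 - N)) =
        Complex.exp (Complex.I * c * (2 * (j + 1 : ℕ) - N)) -
          Complex.exp (Complex.I * c * (2 * j - N)) := by
      intro j _
      simp only [sub_mul, ← Complex.exp_add]
      push_cast
      ring_nf
    rw [Finset.sum_congr rfl h1, tel]
    skip

    congr 1 <;> · congr 1; push_cast; ring
  rw [h2I, hNI] at key
  have h2 : (2 * Complex.I : ℂ) ≠ 0 := by simp [Complex.I_ne_zero]
  have key2 : Complex.sin c * ∑ j ∈ range N, Complex.exp (Complex.I * c * (2 * j + 1 - N))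
      = Complex.sin (N * c) := by
    apply mul_left_cancel₀ h2
    rw [← mul_assoc, key]
  have hc2 : (N : ℂ) * c = ((N * π * x / 2 : ℝ) : ℂ) := by rw [hc]; push_cast; ring
  rw [hc2] at key2
  rw [← Complex.ofReal_sin, ← Complex.ofReal_sin] at key2 <;> try skip
  convert key2 using 4
  rw [hc]; push_cast; ring


lemma orth (N : ℕ) (hN : 1 ≤ N) (m : ℤ) (hm : m.natAbs < N) :
    ∑ k ∈ range N, (Complex.exp (2 * π * Complex.I * m / N)) ^ k
      = if m = 0 then (N : ℂ) else 0 := by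
  rcases eq_or_ne m 0 with h | h
  · simp [h]
  · rw [if_neg h]
    set r := Complex.exp (2 * π * Complex.I * m / N) with hr
    have hNne : (N : ℂ) ≠ 0 := Nat.cast_ne_zero.2 (by omega)
    have hr1 : r ≠ 1 := by
      intro hcon
      rw [hr, Complex.exp_eq_one_iff] at hcon
      obtain ⟨n, hn⟩ := hcon
      have hπ : (π : ℂ) ≠ 0 := by exact_mod_cast Real.pi_ne_zero
      field_simp at hn
      have h2πI : (2 * π * Complex.I : ℂ) ≠ 0 := by
        simp [Complex.I_ne_zero, hπ]
      have hmn : (m : ℂ) = (n : ℂ) * N := by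
        apply mul_left_cancel₀ h2πI
        rw [hn]; ring
      have hmn' : m = n * N := by exact_mod_cast hmn
      have hn0 : n ≠ 0 := by rintro rfl; simp at hmn'; omega
      have hge : N ≤ m.natAbs := by
        rw [hmn', Int.natAbs_mul]
        have h1 : 1 ≤ n.natAbs := Int.natAbs_pos.2 hn0
        have h2 : (N : ℤ).natAbs = N := Int.natAbs_natCast N
        nlinarith [h1, h2]
      omega
    have hrN : r ^ N = 1 := by
      rw [hr, ← Complex.exp_nat_mul]
      have : (N : ℂ) * (2 * π * Complex.I * m / N) = m * (2 * π * Complex.I) := by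
        field_simp
      rw [this]
      exact Complex.exp_int_mul_two_pi_mul_I m
    rw [geom_sum_eq hr1, hrN]
    simp

lemma key (N : ℕ) (hN : 1 ≤ N) (θ : ℝ) :
    ∑ k ∈ range N, (∑ j ∈ range N,
      Complex.exp (Complex.I * (π * (θ - (2 * k + 1 - N) / N) / 2) * (2 * j + 1 - N))) ^ 2
    = (N : ℂ) ^ 2 := by
  have hNne : (N : ℂ) ≠ 0 := Nat.cast_ne_zero.2 (by omega)
  have main : ∀ j ∈ range N, ∀ l ∈ range N,
      (∑ k ∈ range N,
        Complex.exp (Complex.I * (π * (θ - (2 * k + 1 - N) / N) / 2) * (2 * j + 1 - N)) *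
        Complex.exp (Complex.I * (π * (θ - (2 * k + 1 - N) / N) / 2) * (2 * l + 1 - N)))
      = if (j : ℤ) + l + 1 = N then (N : ℂ) else 0 := by
    intro j hj l hl
    simp only [mem_range] at hj hl
    set m : ℤ := (j : ℤ) + l + 1 - N with hm
    have hstep : ∀ k ∈ range N,
        Complex.exp (Complex.I * (π * (θ - (2 * k + 1 - N) / N) / 2) * (2 * j + 1 - N)) *
        Complex.exp (Complex.I * (π * (θ - (2 * k + 1 - N) / N) / 2) * (2 * l + 1 - N))
        = Complex.exp (Complex.I * π * θ * m + Complex.I * π * (N - 1) * m / N) *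
          (Complex.exp (2 * π * Complex.I * (-m) / N)) ^ k := by
      intro k _
      rw [← Complex.exp_add, ← Complex.exp_nat_mul, ← Complex.exp_add]
      congr 1
      have : (m : ℂ) = (j : ℂ) + l + 1 - N := by rw [hm]; push_cast; ring
      rw [this]
      field_simp
      ring
    have horth := orth N hN (-m) (by omega)
    push_cast at horth
    rw [Finset.sum_congr rfl hstep, ← Finset.mul_sum, horth]
    by_cases h0 : m = 0
    · rw [if_pos (by omega), if_pos (by omega)]
      have : Complex.I * π * θ * (m : ℂ) + Complex.I * π * (N - 1) * m / N = 0 := by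
        rw [h0]; push_cast; ring
      rw [this, Complex.exp_zero, one_mul]
    · rw [if_neg (by omega), if_neg (by omega), mul_zero]
  calc ∑ k ∈ range N, (∑ j ∈ range N,
        Complex.exp (Complex.I * (π * (θ - (2 * k + 1 - N) / N) / 2) * (2 * j + 1 - N))) ^ 2
      = ∑ j ∈ range N, ∑ l ∈ range N, ∑ k ∈ range N,
        Complex.exp (Complex.I * (π * (θ - (2 * k + 1 - N) / N) / 2) * (2 * j + 1 - N)) *
        Complex.exp (Complex.I * (π * (θ - (2 * k + 1 - N) / N) / 2) * (2 * l + 1 - N)) := by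
        simp only [sq, Finset.sum_mul_sum]
        rw [Finset.sum_comm]
        exact Finset.sum_congr rfl fun j _ => Finset.sum_comm
    _ = ∑ j ∈ range N, ∑ l ∈ range N, (if (j : ℤ) + l + 1 = N then (N : ℂ) else 0) :=
        Finset.sum_congr rfl fun j hj => Finset.sum_congr rfl fun l hl => main j hj l hl
    _ = ∑ j ∈ range N, (N : ℂ) := by
        refine Finset.sum_congr rfl fun j hj => ?_
        simp only [mem_range] at hj
        have hcond : ∀ l ∈ range N,
            (if (j : ℤ) + l + 1 = N then (N : ℂ) else 0) =
            (if l = N - 1 - j then (N : ℂ) else 0) := by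
          intro l hl
          simp only [mem_range] at hl
          exact if_congr (by omega) rfl rfl
        rw [Finset.sum_congr rfl hcond, Finset.sum_ite_eq', if_pos (by simp [mem_range]; omega)]
    _ = (N : ℂ) ^ 2 := by simp [card_range, sq]

/-- `Σ_{k=1}^{N} Γ(θ - θ̄ k)² = N²` for every `θ ∈ ℝ`, where
`θ̄ k = (2k-N-1)/N` and `G` is the continuous extension of
`Γ(x) = sin(Nπx/2)/sin(πx/2)` (a consequence of unitarity of the steering DFT matrix). -/
theorem gamma_squared_sum (N : ℕ) (hN : 1 ≤ N)
    (G : ℝ → ℝ) (hGcont : Continuous G)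
    (hG : ∀ x, Real.sin (π * x / 2) ≠ 0 →
      G x = Real.sin (N * π * x / 2) / Real.sin (π * x / 2))
    (θbar : Fin N → ℝ) (hθ : ∀ k, θbar k = (2 * ((k : ℕ) : ℝ) + 1 - N) / N)
    (θ : ℝ) :
    ∑ k : Fin N, G (θ - θbar k) ^ 2 = (N : ℝ) ^ 2 := by
  set B : Set ℝ := ⋃ k : Fin N, {t : ℝ | Real.sin (π * (t - θbar k) / 2) = 0} with hB
  have hπ : π ≠ 0 := Real.pi_ne_zero
  have hBcount : B.Countable := by
    refine Set.countable_iUnion fun k => ?_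
    refine Set.Countable.mono ?_ (Set.countable_range (fun n : ℤ => 2 * (n : ℝ) + θbar k))
    intro t ht
    simp only [Set.mem_setOf_eq] at ht
    rw [Real.sin_eq_zero_iff] at ht
    obtain ⟨n, hn⟩ := ht
    refine ⟨n, ?_⟩
    have h2 : (n : ℝ) * 2 = t - θbar k := by
      apply mul_left_cancel₀ hπ
      linarith [hn]
    simp only []
    linarith [h2]
  have hdense : Dense Bᶜ := hBcount.dense_compl ℝ
  have heq : (fun t => ∑ k : Fin N, G (t - θbar k) ^ 2) = fun _ : ℝ => (N : ℝ) ^ 2 := by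
    refine Continuous.ext_on hdense ?_ (by continuity) ?_
    · exact continuous_finset_sum _ fun k _ =>
        ((hGcont.comp (continuous_id.sub continuous_const)).pow 2)
    · intro t ht
      simp only [Set.mem_compl_iff, hB, Set.mem_iUnion, Set.mem_setOf_eq, not_exists] at ht
      have hterm : ∀ k : Fin N, ((G (t - θbar k) : ℝ) : ℂ) =
          ∑ j ∈ range N, Complex.exp
            (Complex.I * (π * (t - (2 * (k : ℕ) + 1 - N) / N) / 2) * (2 * j + 1 - N)) := by
        intro k
        have hx : Real.sin (π * (t - θbar k) / 2) ≠ 0 := ht k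
        have hxC : ((Real.sin (π * (t - θbar k) / 2) : ℝ) : ℂ) ≠ 0 :=
          Complex.ofReal_ne_zero.2 hx
        have h1 := sin_mul_expsum N (t - θbar k)
        have hGx : ((G (t - θbar k) : ℝ) : ℂ) =
            ∑ j ∈ range N, Complex.exp
              (Complex.I * (π * (t - θbar k) / 2) * (2 * j + 1 - N)) := by
          rw [hG _ hx, Complex.ofReal_div, div_eq_iff hxC]
          push_cast at h1 ⊢
          linear_combination -h1
        rw [hGx]
        refine Finset.sum_congr rfl fun j _ => ?_
        congr 2
        rw [hθ k]
        push_cast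
        ring
      have hC : ((∑ k : Fin N, G (t - θbar k) ^ 2 : ℝ) : ℂ) = (((N : ℝ) ^ 2 : ℝ) : ℂ) := by
        push_cast
        calc ∑ k : Fin N, ((G (t - θbar k) : ℝ) : ℂ) ^ 2
            = ∑ k : Fin N, (∑ j ∈ range N, Complex.exp
                (Complex.I * (π * (t - (2 * (k : ℕ) + 1 - N) / N) / 2) * (2 * j + 1 - N))) ^ 2 :=
              Finset.sum_congr rfl fun k _ => by rw [hterm k]
          _ = ∑ k ∈ range N, (∑ j ∈ range N, Complex.exp
                (Complex.I * (π * (t - (2 * k + 1 - N) / N) / 2) * (2 * j + 1 - N))) ^ 2 :=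
              Fin.sum_univ_eq_sum_range (fun k : ℕ => (∑ j ∈ range N, Complex.exp
                (Complex.I * ((π : ℂ) * ((t : ℂ) - (2 * k + 1 - N) / N) / 2) * (2 * j + 1 - N))) ^ 2) N
          _ = (N : ℂ) ^ 2 := key N hN t
      exact_mod_cast hC
  have := congrFun heq θ
  simpa using this
end
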